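/- arXiv:math/0504528 — 5 statements merged into one kernel-verified Lean document; each statement's English description precedes it below -/
import Mathlib

section
/- Let a, b, n be positive integers. Then a^{<n>} + b^{<n>} > (a+b)^{<n>}, where for a positive integer h with n-th binomial representation h = Σ_{j=i}^{n} C(h(j)+j, j), one defines h^{<n>} = Σ_{j=i}^{n} C(h(j)+j+1, j). -/
open Finset

/-- Monomials of `K[x_1,…,x_n]` are encoded as exponent vectors `Fin n → ℕ`.
`mulVarsOn S W = {x_j · w : w ∈ W, j ∈ S}`. -/
def mulVarsOn {n : ℕ} (S : Finset (Fin n)) (W : Finset (Fin n → ℕ)) :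
    Finset (Fin n → ℕ) :=
  W.biUnion fun v => S.image fun j => v + Pi.single j 1

/-- `MV = {x_j · v : v ∈ V, 1 ≤ j ≤ n}`. -/
def mulVars {n : ℕ} (W : Finset (Fin n → ℕ)) : Finset (Fin n → ℕ) :=
  mulVarsOn Finset.univ W

/-- `IsBinRep m h p f` says that `h = ∑_{j=p}^{m} C(f j + j, j)` is the `m`-th
binomial representation of `h`: `1 ≤ p ≤ m` and `f` is weakly increasing on `[p,m]`. -/
def IsBinRep (m h p : ℕ) (f : ℕ → ℕ) : Prop :=
  1 ≤ p ∧ p ≤ m ∧ (∀ j k, p ≤ j → j ≤ k → k ≤ m → f j ≤ f k) ∧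
    h = ∑ j ∈ Finset.Icc p m, Nat.choose (f j + j) j

/-- `h^{<m>} = ∑_{j=p}^{m} C(f j + j + 1, j)` for the `m`-th binomial representation `(p, f)`. -/
def upVal (m p : ℕ) (f : ℕ → ℕ) : ℕ :=
  ∑ j ∈ Finset.Icc p m, Nat.choose (f j + j + 1) j

/-- `h_{<<m>>} = ∑_{j=p}^{m} C(f j + j - 1, j - 1)` for the `m`-th binomial representation `(p, f)`. -/
def downVal (m p : ℕ) (f : ℕ → ℕ) : ℕ :=
  ∑ j ∈ Finset.Icc p m, Nat.choose (f j + j - 1) (j - 1)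

/-- `W` is a Gotzmann set with respect to the set of variables `S`:
either `W = ∅`, or (in at most one variable) `|SW| = |W|`, or
`|SW| = |W|^{<|S|-1>}` computed from the `(|S|-1)`-th binomial representation of `|W|`. -/
def IsGotzmannOn {n : ℕ} (S : Finset (Fin n)) (W : Finset (Fin n → ℕ)) : Prop :=
  W = ∅ ∨ (S.card ≤ 1 ∧ (mulVarsOn S W).card = W.card) ∨
    ∃ p f, IsBinRep (S.card - 1) W.card p f ∧
      (mulVarsOn S W).card = upVal (S.card - 1) p f

/-- `V` is a Gotzmann set of monomials of `K[x_1,…,x_n]`: `|MV| = |V|^{<n-1>}`. -/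
def IsGotzmann {n : ℕ} (W : Finset (Fin n → ℕ)) : Prop :=
  IsGotzmannOn Finset.univ W

/-- The exponent vector of `gcd(V)` (pointwise minimum of the exponent vectors). -/
noncomputable def gcdMon {n : ℕ} (V : Finset (Fin n → ℕ)) : Fin n → ℕ :=
  fun j => sInf ((fun v => v j) '' (V : Set (Fin n → ℕ)))

/-- `w` comes strictly earlier than `v` in the lexicographic order on monomials
(`x_1 > x_2 > … > x_n`, larger exponent vector comes earlier). -/
def lexEarlier {n : ℕ} (w v : Fin n → ℕ) : Prop :=
  ∃ i : Fin n, (∀ j, j < i → w j = v j) ∧ v i < w i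

/-- `V` is a lexsegment set of monomials of degree `d`: an initial segment of
the monomials of degree `d` in lexicographic order. -/
def IsLexSegment (n d : ℕ) (V : Finset (Fin n → ℕ)) : Prop :=
  (∀ v ∈ V, ∑ j, v j = d) ∧
    ∀ v ∈ V, ∀ w : Fin n → ℕ, (∑ j, w j = d) → lexEarlier w v → w ∈ V

/-- `V` is strongly stable: for `u ∈ V`, `i < j` with `x_j ∣ u`, also `(x_i/x_j)·u ∈ V`. -/
def IsStronglyStable {n : ℕ} (V : Finset (Fin n → ℕ)) : Prop :=
  ∀ u ∈ V, ∀ i j : Fin n, i < j → 0 < u j →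
    (u + Pi.single i 1 - Pi.single j 1) ∈ V

/-- `u` is a fixed empty element of `V` (of degree `d`) for `i`: no monomial of
degree `d` which is under `u` for `i` (all exponents except possibly the `i`-th
bounded by those of `u`) belongs to `V`. -/
def IsFEE (n d : ℕ) (V : Finset (Fin n → ℕ)) (i : Fin n) (u : Fin n → ℕ) : Prop :=
  u ∉ V ∧ ∀ v : Fin n → ℕ, (∑ j, v j = d) → (∀ j, j ≠ i → v j ≤ u j) → v ∉ V

/-!
Write `T_n(g) = C(g+n, n)`. The value `h^{<n>}` does not depend on the representation: it is
`upper n h`, computed greedily by writing `h = T_n(e) + r` with `r < T_{n-1}(e+1)` and recursing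
on `r` one level down, so that on each block `[T_n(e), T_n(e+1))` the function `upper n` is a
shifted copy of `upper (n-1)`. Blockwise, strict subadditivity of `upper (n+1)` then reduces to
subadditivity of `upper n`, the comparison `upper n h < upper (n+1) h`, and a concavity property
at the block ends: `T_n(δ+1) + upper n w ≤ upper n x + upper n y` whenever `x, y ≤ T_n(δ)` and
`x + y = T_n(δ) + w`. Subadditivity and this concavity are proved together by induction on `n`;
the concavity step rests on an exchange inequality: moving part of an argument of `upper n` to an
argument of `upper (n+1)` does not decrease the sum.
-/

namespace BinomialRep

-- The number of monomials of degree at most `g` in `n` variables.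
def simplexNum (n g : ℕ) : ℕ := (g + n).choose n

lemma simplexNum_zero_right (n : ℕ) : simplexNum n 0 = 1 := by simp [simplexNum]

lemma simplexNum_one_right (n : ℕ) : simplexNum n 1 = n + 1 := by
  rw [simplexNum, add_comm, Nat.choose_succ_self_right]

lemma simplexNum_zero_left (g : ℕ) : simplexNum 0 g = 1 := by simp [simplexNum]

lemma simplexNum_succ_succ (n g : ℕ) :
    simplexNum (n + 1) (g + 1) = simplexNum (n + 1) g + simplexNum n (g + 1) := by
  rw [simplexNum, simplexNum, simplexNum, show g + 1 + (n + 1) = g + n + 1 + 1 by omega,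
    show g + (n + 1) = g + n + 1 by omega, show g + 1 + n = g + n + 1 by omega,
    Nat.choose_succ_succ', add_comm]

lemma simplexNum_pos (n g : ℕ) : 0 < simplexNum n g := Nat.choose_pos (by omega)

lemma simplexNum_mono (n : ℕ) : Monotone (simplexNum n) :=
  fun _ _ h => Nat.choose_le_choose n (by omega)

lemma simplexNum_strictMono (n : ℕ) : StrictMono (simplexNum (n + 1)) :=
  strictMono_nat_of_lt_succ fun g => by
    have := simplexNum_pos n (g + 1)
    rw [simplexNum_succ_succ]
    omega

lemma lt_simplexNum (n g : ℕ) : g < simplexNum (n + 1) g := by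
  induction g with
  | zero => exact simplexNum_pos _ _
  | succ g ih => exact lt_of_le_of_lt ih (simplexNum_strictMono n g.lt_succ_self)

-- The exponent `h(n)` of the leading term of the `n`-th binomial representation of `h`.
def topIndex (n h : ℕ) : ℕ := Nat.findGreatest (fun g => simplexNum n g ≤ h) h

lemma simplexNum_topIndex_le {n h : ℕ} (hh : 0 < h) :
    simplexNum (n + 1) (topIndex (n + 1) h) ≤ h :=
  Nat.findGreatest_spec (P := fun g => simplexNum (n + 1) g ≤ h) (Nat.zero_le h)
    (by rwa [simplexNum_zero_right])

lemma lt_simplexNum_topIndex_succ (n : ℕ) {h : ℕ} :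
    h < simplexNum (n + 1) (topIndex (n + 1) h + 1) := by
  by_contra hle
  refine Nat.findGreatest_is_greatest (P := fun g => simplexNum (n + 1) g ≤ h)
    (Nat.lt_succ_self _) ?_ (not_lt.mp hle)
  exact (lt_simplexNum n _).le.trans (not_lt.mp hle)

lemma topIndex_eq {n h e : ℕ} (h₁ : simplexNum (n + 1) e ≤ h)
    (h₂ : h < simplexNum (n + 1) (e + 1)) : topIndex (n + 1) h = e := by
  have hle : simplexNum (n + 1) (topIndex (n + 1) h) < simplexNum (n + 1) (e + 1) :=
    (simplexNum_topIndex_le ((simplexNum_pos _ _).trans_le h₁)).trans_lt h₂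
  have hge : e ≤ topIndex (n + 1) h :=
    Nat.le_findGreatest ((lt_simplexNum n e).le.trans h₁) h₁
  have := (simplexNum_strictMono n).lt_iff_lt.mp hle
  omega

lemma exists_block (n : ℕ) {h : ℕ} (hh : 0 < h) :
    ∃ e r, h = simplexNum (n + 1) e + r ∧
      simplexNum (n + 1) e + r < simplexNum (n + 1) (e + 1) :=
  ⟨topIndex (n + 1) h, h - simplexNum (n + 1) (topIndex (n + 1) h),
    by have := simplexNum_topIndex_le (n := n) hh; omega,
    by have := simplexNum_topIndex_le (n := n) hh
       have := lt_simplexNum_topIndex_succ n (h := h); omega⟩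

def upper : ℕ → ℕ → ℕ
  | _, 0 => 0
  | 0, h + 1 => h + 1
  | n + 1, h + 1 =>
      simplexNum (n + 1) (topIndex (n + 1) (h + 1) + 1) +
        upper n (h + 1 - simplexNum (n + 1) (topIndex (n + 1) (h + 1)))

@[simp] lemma upper_zero_right (n : ℕ) : upper n 0 = 0 := by cases n <;> rfl

@[simp] lemma upper_zero_left (h : ℕ) : upper 0 h = h := by cases h <;> rfl

lemma upper_block_of_lt {n e r : ℕ}
    (hr : simplexNum (n + 1) e + r < simplexNum (n + 1) (e + 1)) :
    upper (n + 1) (simplexNum (n + 1) e + r) = simplexNum (n + 1) (e + 1) + upper n r := by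
  obtain ⟨k, hk⟩ : ∃ k, simplexNum (n + 1) e + r = k + 1 :=
    ⟨simplexNum (n + 1) e + r - 1, by have := simplexNum_pos (n + 1) e; omega⟩
  rw [hk, upper, ← hk, topIndex_eq (by omega) hr, Nat.add_sub_cancel_left]

lemma upper_simplexNum (n g : ℕ) : upper n (simplexNum n g) = simplexNum n (g + 1) := by
  cases n with
  | zero => simp [simplexNum_zero_left]
  | succ n =>
    simpa using upper_block_of_lt (r := 0) (by simpa using simplexNum_strictMono n g.lt_succ_self)

lemma upper_block {n e r : ℕ}
    (hr : simplexNum (n + 1) e + r ≤ simplexNum (n + 1) (e + 1)) :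
    upper (n + 1) (simplexNum (n + 1) e + r) = simplexNum (n + 1) (e + 1) + upper n r := by
  rcases hr.lt_or_eq with hr | hr
  · exact upper_block_of_lt hr
  · obtain rfl : r = simplexNum n (e + 1) := by rw [simplexNum_succ_succ] at hr; omega
    rw [hr, upper_simplexNum, upper_simplexNum, simplexNum_succ_succ n (e + 1)]

lemma upper_one (n : ℕ) : upper n 1 = n + 1 := by
  simpa [simplexNum_zero_right, simplexNum_one_right] using upper_simplexNum n 0

lemma sum_Icc_choose_lt_simplexNum {p : ℕ} (hp : 1 ≤ p) (g n : ℕ) :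
    ∑ j ∈ Icc p n, (g + j).choose j < simplexNum n (g + 1) := by
  have hstick : ∑ j ∈ range (n + 1), (g + j).choose j = simplexNum n (g + 1) := by
    rw [simplexNum, ← Nat.choose_symm_add, show g + 1 + n = n + g + 1 by omega,
      ← Nat.sum_range_add_choose]
    exact sum_congr rfl fun j _ => by rw [add_comm, Nat.choose_symm_add]
  rw [← hstick]
  refine sum_lt_sum_of_subset (i := 0) (fun j hj => ?_) (by simp) (by simp; omega) (by simp)
    (fun _ _ _ => Nat.zero_le _)
  simp only [mem_Icc, mem_range] at hj ⊢
  omega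

theorem upVal_eq_upper {n h p : ℕ} {f : ℕ → ℕ} (hrep : IsBinRep n h p f) :
    upVal n p f = upper n h := by
  induction n generalizing h with
  | zero => exact absurd hrep.2.1 (by have := hrep.1; omega)
  | succ n ih =>
    obtain ⟨hp, hpn, hmono, rfl⟩ := hrep
    have htop : (f (n + 1) + (n + 1) + 1).choose (n + 1) = simplexNum (n + 1) (f (n + 1) + 1) := by
      rw [simplexNum, add_right_comm]
    rcases hpn.lt_or_eq with hpn | rfl
    · set rest := ∑ j ∈ Icc p n, (f j + j).choose j
      have hrest : rest < simplexNum n (f (n + 1) + 1) :=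
        (sum_le_sum fun j hj => Nat.choose_le_choose j <| by
          have := hmono j (n + 1) (mem_Icc.mp hj).1 (by simp at hj; omega) le_rfl
          omega).trans_lt (sum_Icc_choose_lt_simplexNum hp _ _)
      have hrep' : IsBinRep n rest p f :=
        ⟨hp, by omega, fun j k hj hk hkn => hmono j k hj hk (by omega), rfl⟩
      rw [upVal, sum_Icc_succ_top (by omega), sum_Icc_succ_top (by omega), ← upVal, ih hrep',
        htop, add_comm, add_comm rest]
      have := simplexNum_succ_succ n (f (n + 1))
      exact (upper_block_of_lt (n := n) (e := f (n + 1)) (r := rest) (by omega)).symm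
    · simp only [upVal, Icc_self, sum_singleton, htop]
      exact (upper_simplexNum _ _).symm

def IsSubadditive (n : ℕ) : Prop :=
  ∀ a b, upper n (a + b) ≤ upper n a + upper n b

-- As `upper n (simplexNum n δ) = simplexNum n (δ + 1)`, among the splittings of `x + y` into two
-- parts at most `simplexNum n δ`, the most unbalanced one minimises `upper n x + upper n y`.
def SimplexConcave (n : ℕ) : Prop :=
  ∀ δ x y w, x ≤ simplexNum n δ → y ≤ simplexNum n δ → x + y = simplexNum n δ + w →
    simplexNum n (δ + 1) + upper n w ≤ upper n x + upper n y

lemma isSubadditive_zero : IsSubadditive 0 := fun a b => by simp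

lemma simplexConcave_zero : SimplexConcave 0 := fun δ x y w _ _ hsum => by
  simp only [simplexNum_zero_left, upper_zero_left] at hsum ⊢
  omega

section Step

variable {n : ℕ}

lemma upper_simplexNum_succ_lt (hsub : IsSubadditive n) (γ : ℕ) :
    upper n (simplexNum (n + 1) γ) < simplexNum (n + 1) (γ + 1) := by
  induction γ with
  | zero => simp [simplexNum_zero_right, simplexNum_one_right, upper_one]
  | succ γ ih =>
    have hT := simplexNum_succ_succ n (γ + 1)
    calc upper n (simplexNum (n + 1) (γ + 1))
        = upper n (simplexNum (n + 1) γ + simplexNum n (γ + 1)) := by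
          rw [simplexNum_succ_succ]
      _ ≤ upper n (simplexNum (n + 1) γ) + upper n (simplexNum n (γ + 1)) := hsub _ _
      _ = upper n (simplexNum (n + 1) γ) + simplexNum n (γ + 1 + 1) := by
          rw [upper_simplexNum]
      _ < simplexNum (n + 1) (γ + 1 + 1) := by omega

lemma upper_lt_upper_succ (hsub : IsSubadditive n) {h : ℕ} (hh : 0 < h) :
    upper n h < upper (n + 1) h := by
  obtain ⟨e, r, rfl, hr⟩ := exists_block n hh
  rw [upper_block_of_lt hr]
  have := hsub (simplexNum (n + 1) e) r
  have := upper_simplexNum_succ_lt hsub e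
  omega

lemma upper_le_upper_succ (hsub : IsSubadditive n) (h : ℕ) : upper n h ≤ upper (n + 1) h := by
  rcases h.eq_zero_or_pos with rfl | hh
  · simp
  · exact (upper_lt_upper_succ hsub hh).le

lemma simplexNum_succ_add_upper_le (hsub : IsSubadditive n) (t j : ℕ) :
    simplexNum (n + 1) (j + 1) + upper n t ≤ upper (n + 1) (simplexNum (n + 1) j + t) := by
  induction t using Nat.strong_induction_on generalizing j with
  | _ t ih =>
    by_cases ht : t ≤ simplexNum n (j + 1)
    · rw [upper_block (by rw [simplexNum_succ_succ]; omega)]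
    · obtain ⟨t', rfl⟩ := Nat.exists_eq_add_of_le (not_le.mp ht).le
      have hT := simplexNum_succ_succ n (j + 1)
      have := ih t' (by have := simplexNum_pos n (j + 1); omega) (j + 1)
      have := hsub (simplexNum n (j + 1)) t'
      rw [upper_simplexNum] at this
      rw [show simplexNum (n + 1) j + (simplexNum n (j + 1) + t') =
        simplexNum (n + 1) (j + 1) + t' by rw [simplexNum_succ_succ]; omega]
      omega

lemma upper_exchange_of_le_block (hC : SimplexConcave n) {δ e ρ s y : ℕ} (he : e + 1 ≤ δ)
    (hsy : s + y = simplexNum n δ) (hρs : ρ + s ≤ simplexNum n (e + 1)) :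
    simplexNum n (δ + 1) + upper (n + 1) (simplexNum (n + 1) e + ρ) ≤
      upper (n + 1) (simplexNum (n + 1) e + ρ + s) + upper n y := by
  have hT := simplexNum_succ_succ n e
  have hmono := simplexNum_mono n he
  rw [upper_block (by omega), add_assoc, upper_block (by omega)]
  have := hC δ (ρ + s) y ρ (by omega) (by omega) (by omega)
  omega

-- Since `simplexNum n (δ + 1) = upper n (s + y)`, this says that moving `s` from the argument of
-- `upper n` to the argument of `upper (n + 1)` does not decrease the sum.
lemma upper_exchange (hsub : IsSubadditive n) (hC : SimplexConcave n) {δ s y w : ℕ}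
    (hsy : s + y = simplexNum n δ) (hws : w + s ≤ simplexNum (n + 1) δ) :
    simplexNum n (δ + 1) + upper (n + 1) w ≤ upper (n + 1) (w + s) + upper n y := by
  rcases s.eq_zero_or_pos with rfl | hs
  · rw [zero_add] at hsy
    rw [add_zero, hsy, upper_simplexNum, add_comm]
  rcases w.eq_zero_or_pos with rfl | hw
  · have := hsub s y
    have := upper_le_upper_succ hsub s
    rw [hsy, upper_simplexNum] at *
    simp only [upper_zero_right, zero_add]
    omega
  obtain ⟨e, ρ, rfl, hρ⟩ := exists_block n hw
  have he : e + 1 ≤ δ := (simplexNum_strictMono n).lt_iff_lt.mp (by omega)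
  have hT := simplexNum_succ_succ n e
  by_cases hρs : ρ + s ≤ simplexNum n (e + 1)
  · exact upper_exchange_of_le_block hC he hsy hρs
  obtain ⟨s₂, rfl⟩ : ∃ s₂, s = (simplexNum n (e + 1) - ρ) + s₂ :=
    ⟨s - (simplexNum n (e + 1) - ρ), by omega⟩
  have hfirst := upper_exchange_of_le_block hC (ρ := ρ) (s := simplexNum n (e + 1) - ρ)
    (y := y + s₂) he (by omega) (by omega)
  rw [show simplexNum (n + 1) e + ρ + (simplexNum n (e + 1) - ρ) = simplexNum (n + 1) (e + 1) by
    omega, upper_simplexNum] at hfirst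
  have hrest := simplexNum_succ_add_upper_le hsub s₂ (e + 1)
  rw [show simplexNum (n + 1) (e + 1) + s₂ =
    simplexNum (n + 1) e + ρ + (simplexNum n (e + 1) - ρ + s₂) by omega] at hrest
  have := hsub y s₂
  omega

lemma SimplexConcave.succ (hsub : IsSubadditive n) (hC : SimplexConcave n) :
    SimplexConcave (n + 1) := by
  intro δ
  induction δ with
  | zero =>
    intro x y w hx hy hsum
    rw [simplexNum_zero_right] at hx hy hsum
    rw [zero_add, simplexNum_one_right]
    obtain rfl : w = x + y - 1 := by omega
    interval_cases x <;> interval_cases y <;> simp_all [upper_one]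
  | succ δ ih =>
    intro x y w hx hy hsum
    wlog hxy : x ≤ y generalizing x y
    · have := this y x hy hx (by omega) (by omega)
      omega
    have hT := simplexNum_succ_succ n (δ + 1)
    have hT' := simplexNum_succ_succ n δ
    rcases hy.eq_or_lt with rfl | hy
    · obtain rfl : w = x := by omega
      rw [upper_simplexNum]
      omega
    by_cases hyδ : simplexNum (n + 1) δ ≤ y
    · obtain ⟨r, rfl⟩ := Nat.exists_eq_add_of_le hyδ
      have := upper_exchange hsub hC (δ := δ + 1) (s := simplexNum n (δ + 1) - r) (y := r)
        (w := w) (by omega) (by omega)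
      rw [show w + (simplexNum n (δ + 1) - r) = x by omega] at this
      rw [upper_block_of_lt (by omega)]
      omega
    · have hrec := ih x y (w + simplexNum n (δ + 1)) (by omega) (by omega) (by omega)
      have := upper_exchange hsub hC (δ := δ + 1) (s := simplexNum n (δ + 1)) (y := 0) (w := w)
        (by omega) (by omega)
      rw [upper_zero_right] at this
      omega

lemma simplexNum_succ_lt_upper_add (hsub : IsSubadditive n) (hC : SimplexConcave (n + 1))
    {δ x y : ℕ} (hx : 0 < x) (hy : 0 < y) (hsum : x + y = simplexNum (n + 1) δ) :
    simplexNum (n + 1) (δ + 1) < upper (n + 1) x + upper (n + 1) y := by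
  wlog hxy : x ≤ y generalizing x y
  · have := this hy hx (by omega) (by omega)
    omega
  rcases δ with _ | δ
  · rw [simplexNum_zero_right] at hsum
    omega
  have hT := simplexNum_succ_succ n (δ + 1)
  have hT' := simplexNum_succ_succ n δ
  by_cases hyδ : simplexNum (n + 1) δ ≤ y
  · obtain ⟨r, rfl⟩ := Nat.exists_eq_add_of_le hyδ
    rw [upper_block_of_lt (by omega)]
    have := hsub x r
    have := upper_lt_upper_succ hsub hx
    rw [show x + r = simplexNum n (δ + 1) by omega, upper_simplexNum] at *
    omega
  · have := hC δ x y (simplexNum n (δ + 1)) (by omega) (by omega) (by omega)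
    have := upper_lt_upper_succ hsub (simplexNum_pos n (δ + 1))
    rw [upper_simplexNum] at *
    omega

lemma upper_add_lt_of_same_block (hsub : IsSubadditive n) {γ r b : ℕ} (hb : 0 < b)
    (hblock : simplexNum (n + 1) γ + r + b < simplexNum (n + 1) (γ + 1)) :
    upper (n + 1) (simplexNum (n + 1) γ + r + b) <
      upper (n + 1) (simplexNum (n + 1) γ + r) + upper (n + 1) b := by
  rw [add_assoc, upper_block_of_lt (by omega), upper_block_of_lt (by omega)]
  have := hsub r b
  have := upper_lt_upper_succ hsub hb
  omega

lemma upper_add_lt (hsub : IsSubadditive n) (hC : SimplexConcave (n + 1)) {a b : ℕ}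
    (ha : 0 < a) (hb : 0 < b) : upper (n + 1) (a + b) < upper (n + 1) a + upper (n + 1) b := by
  obtain ⟨γ, r, hab, hr⟩ := exists_block n (Nat.add_pos_left ha b)
  by_cases ha' : simplexNum (n + 1) γ ≤ a
  · obtain ⟨ra, rfl⟩ := Nat.exists_eq_add_of_le ha'
    exact upper_add_lt_of_same_block hsub hb (by omega)
  by_cases hb' : simplexNum (n + 1) γ ≤ b
  · obtain ⟨rb, rfl⟩ := Nat.exists_eq_add_of_le hb'
    rw [add_comm a, add_comm (upper _ a)]
    exact upper_add_lt_of_same_block hsub ha (by omega)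
  rw [hab, upper_block_of_lt (hab ▸ hr)]
  rcases r.eq_zero_or_pos with rfl | hr₀
  · simpa using simplexNum_succ_lt_upper_add hsub hC ha hb (by omega)
  · have := hC γ a b r (by omega) (by omega) hab
    have := upper_lt_upper_succ hsub hr₀
    omega

end Step

lemma isSubadditive_and_simplexConcave (n : ℕ) : IsSubadditive n ∧ SimplexConcave n := by
  induction n with
  | zero => exact ⟨isSubadditive_zero, simplexConcave_zero⟩
  | succ n ih =>
    have hC := ih.2.succ ih.1
    refine ⟨fun a b => ?_, hC⟩
    rcases a.eq_zero_or_pos with rfl | ha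
    · simp
    rcases b.eq_zero_or_pos with rfl | hb
    · simp
    exact (upper_add_lt ih.1 hC ha hb).le

end BinomialRep

/-- `a^{<n>} + b^{<n>} > (a+b)^{<n>}` for positive integers `a, b, n`. -/
theorem upVal_add_lt (n a b pa pb pc : ℕ) (fa fb fc : ℕ → ℕ)
    (hn : 0 < n) (ha : 0 < a) (hb : 0 < b)
    (hra : IsBinRep n a pa fa) (hrb : IsBinRep n b pb fb)
    (hrc : IsBinRep n (a + b) pc fc) :
    upVal n pc fc < upVal n pa fa + upVal n pb fb := by
  obtain ⟨m, rfl⟩ : ∃ m, n = m + 1 := ⟨n - 1, by omega⟩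
  rw [BinomialRep.upVal_eq_upper hra, BinomialRep.upVal_eq_upper hrb,
    BinomialRep.upVal_eq_upper hrc]
  exact BinomialRep.upper_add_lt (BinomialRep.isSubadditive_and_simplexConcave m).1
    (BinomialRep.isSubadditive_and_simplexConcave (m + 1)).2 ha hb
end

section
/- Let V be a finite set of monomials of degree d in the polynomial ring K[x_1,...,x_n], let u = gcd(V), and write V = u·V' for a set V' of monomials. Then V is a Gotzmann set if and only if V' is a Gotzmann set. -/
open Finset

/-!
Multiplying by a fixed monomial is injective and commutes with multiplication by the
variables, so it preserves both `|V|` and `|MV|`, which are all the Gotzmann condition sees.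
Every monomial of `V` is divisible by `gcd(V)`, so `V` is the translate of `V'` by `gcd(V)`.
-/

variable {n : ℕ}

theorem isGotzmannOn_congr_card {S : Finset (Fin n)} {W W' : Finset (Fin n → ℕ)}
    (hcard : W.card = W'.card) (hmul : (mulVarsOn S W).card = (mulVarsOn S W').card) :
    IsGotzmannOn S W ↔ IsGotzmannOn S W' := by
  have hempty : W = ∅ ↔ W' = ∅ := by
    rw [← card_eq_zero, hcard, card_eq_zero]
  unfold IsGotzmannOn
  rw [hcard, hmul, hempty]

theorem mulVarsOn_image_add_right (S : Finset (Fin n)) (W : Finset (Fin n → ℕ))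
    (u : Fin n → ℕ) :
    mulVarsOn S (W.image (· + u)) = (mulVarsOn S W).image (· + u) := by
  simp only [mulVarsOn, image_biUnion, biUnion_image, image_image, Function.comp_def,
    add_right_comm]

theorem isGotzmannOn_image_add_right (S : Finset (Fin n)) (W : Finset (Fin n → ℕ))
    (u : Fin n → ℕ) :
    IsGotzmannOn S (W.image (· + u)) ↔ IsGotzmannOn S W := by
  apply isGotzmannOn_congr_card
  · exact card_image_of_injective W (add_left_injective u)
  · rw [mulVarsOn_image_add_right]
    exact card_image_of_injective _ (add_left_injective u)

theorem gcdMon_le {V : Finset (Fin n → ℕ)} {v : Fin n → ℕ} (hv : v ∈ V) : gcdMon V ≤ v :=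
  fun _ => Nat.sInf_le ⟨v, hv, rfl⟩

theorem image_sub_gcdMon_add_gcdMon (V : Finset (Fin n → ℕ)) :
    (V.image (· - gcdMon V)).image (· + gcdMon V) = V := by
  rw [image_image]
  exact (image_congr fun v hv => tsub_add_cancel_of_le (gcdMon_le hv)).trans image_id'

theorem gotzmann_iff_div_gcd_general {n : ℕ} (V : Finset (Fin n → ℕ)) :
    IsGotzmann V ↔ IsGotzmann (V.image fun v => v - gcdMon V) := by
  unfold IsGotzmann
  conv_lhs => rw [← image_sub_gcdMon_add_gcdMon V]
  exact isGotzmannOn_image_add_right _ _ _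

/-- With `u = gcd(V)` and `V = u·V'`, `V` is Gotzmann iff `V'` is Gotzmann. -/
theorem gotzmann_iff_div_gcd {n : ℕ} (d : ℕ) (V : Finset (Fin n → ℕ))
    (hdeg : ∀ v ∈ V, ∑ j, v j = d) :
    IsGotzmann V ↔ IsGotzmann (V.image fun v => v - gcdMon V) :=
  gotzmann_iff_div_gcd_general V
end

section
/- In the polynomial ring K[x_1, x_2] in two variables, a nonempty finite set V of monomials of degree d with gcd(V) = 1 is a Gotzmann set if and only if V = M^d, the set of all monomials of degree d. -/
open Finset

/-!
A set `V` of monomials of degree `d` in two variables is determined by the set `A ⊆ [0, d]` of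
exponents of `x_1` occurring in it, and `MV` corresponds in the same way to `A ∪ (A + 1)`.
The condition `gcd(V) = 1` says that `0, d ∈ A`, and `|V|^{<1>} = |V| + 1`. Since `A + 1`
always contributes the new element `d + 1`, the equality `|A ∪ (A + 1)| = |A| + 1` holds
exactly when `A + 1 ⊆ A ∪ {d + 1}`, i.e. when `A` has no gaps, i.e. `A = [0, d]`.
-/

namespace Finset

theorem eq_Icc_of_card_union_image_succ {A : Finset ℕ} {a b : ℕ} (ha : a ∈ A) (hb : b ∈ A)
    (hA : A ⊆ Icc a b) (hcard : (A ∪ A.image (· + 1)).card = A.card + 1) : A = Icc a b := by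
  have hb' : b + 1 ∉ A := fun h => by have := mem_Icc.mp (hA h); omega
  have hunion : A ∪ A.image (· + 1) = insert (b + 1) A := by
    refine (eq_of_subset_of_card_le (insert_subset ?_ subset_union_left) ?_).symm
    · exact mem_union_right _ (mem_image_of_mem _ hb)
    · rw [card_insert_of_notMem hb', hcard]
  have hsucc : ∀ k ∈ A, k < b → k + 1 ∈ A := fun k hk hkb => by
    have : k + 1 ∈ insert (b + 1) A := hunion ▸ mem_union_right _ (mem_image_of_mem _ hk)
    exact (mem_insert.mp this).resolve_left (by omega)
  refine Subset.antisymm hA fun k hk => ?_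
  obtain ⟨hak, hkb⟩ := mem_Icc.mp hk
  induction k, hak using Nat.le_induction with
  | base => exact ha
  | succ k hak ih => exact hsucc k (ih (mem_Icc.mpr ⟨hak, by omega⟩) (by omega)) (by omega)

theorem Icc_union_image_succ {a b : ℕ} (hab : a ≤ b) :
    Icc a b ∪ (Icc a b).image (· + 1) = Icc a (b + 1) := by
  ext k
  simp only [mem_union, mem_image, mem_Icc]
  constructor
  · rintro (h | ⟨j, hj, rfl⟩) <;> omega
  · intro h
    by_cases hk : k ≤ b
    · exact Or.inl ⟨h.1, hk⟩
    · exact Or.inr ⟨b, by omega, by omega⟩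

theorem card_union_image_succ_eq_iff {A : Finset ℕ} {a b : ℕ} (ha : a ∈ A) (hb : b ∈ A)
    (hA : A ⊆ Icc a b) : (A ∪ A.image (· + 1)).card = A.card + 1 ↔ A = Icc a b := by
  refine ⟨eq_Icc_of_card_union_image_succ ha hb hA, ?_⟩
  rintro rfl
  have hab : a ≤ b := (mem_Icc.mp hb).1
  rw [Icc_union_image_succ hab, Nat.card_Icc, Nat.card_Icc]
  omega

end Finset

theorem sum_add_single_one {n : ℕ} (v : Fin n → ℕ) (j : Fin n) :
    ∑ k, (v + Pi.single j 1 : Fin n → ℕ) k = ∑ k, v k + 1 := by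
  simp [sum_add_distrib]

theorem exists_mem_apply_eq_zero_of_gcdMon_eq_zero {n : ℕ} {V : Finset (Fin n → ℕ)}
    (hne : V.Nonempty) {j : Fin n} (h : gcdMon V j = 0) : ∃ v ∈ V, v j = 0 := by
  obtain ⟨v, hv⟩ := hne
  rcases Nat.sInf_eq_zero.mp h with ⟨u, hu, hu0⟩ | hempty
  · exact ⟨u, hu, hu0⟩
  · exact absurd hempty (Set.Nonempty.ne_empty ⟨v j, v, hv, rfl⟩)

section TwoVariables

variable {V : Finset (Fin 2 → ℕ)}

theorem injOn_apply_zero_of_sum_eq (e : ℕ) :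
    Set.InjOn (fun v : Fin 2 → ℕ => v 0) {v | ∑ j, v j = e} := by
  intro u hu w hw h0
  simp only [Set.mem_ofPred_eq, Fin.sum_univ_two] at hu hw
  have h0 : u 0 = w 0 := h0
  ext j
  fin_cases j
  · exact h0
  · simp only [Fin.mk_one]; omega

theorem card_image_apply_zero {e : ℕ} {W : Finset (Fin 2 → ℕ)} (hW : ∀ w ∈ W, ∑ j, w j = e) :
    (W.image fun v => v 0).card = W.card :=
  card_image_of_injOn fun _ hu _ hw => injOn_apply_zero_of_sum_eq e (hW _ hu) (hW _ hw)

theorem mem_mulVars_iff_two {w : Fin 2 → ℕ} :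
    w ∈ mulVars V ↔ ∃ v ∈ V, w = v + Pi.single 0 1 ∨ w = v + Pi.single 1 1 := by
  simp only [mulVars, mulVarsOn, mem_biUnion, mem_image, mem_univ, true_and, Fin.exists_fin_two,
    eq_comm (b := w)]

theorem image_apply_zero_mulVars :
    (mulVars V).image (fun v => v 0) =
      V.image (fun v => v 0) ∪ (V.image fun v => v 0).image (· + 1) := by
  ext b
  simp only [mem_image, mem_union, mem_mulVars_iff_two]
  constructor
  · rintro ⟨w, ⟨v, hv, rfl | rfl⟩, rfl⟩
    · exact Or.inr ⟨v 0, ⟨v, hv, rfl⟩, by simp⟩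
    · exact Or.inl ⟨v, hv, by simp⟩
  · rintro (⟨v, hv, rfl⟩ | ⟨_, ⟨v, hv, rfl⟩, rfl⟩)
    · exact ⟨v + Pi.single 1 1, ⟨v, hv, Or.inr rfl⟩, by simp⟩
    · exact ⟨v + Pi.single 0 1, ⟨v, hv, Or.inl rfl⟩, by simp⟩

theorem card_mulVars_two {d : ℕ} (hV : ∀ v ∈ V, ∑ j, v j = d) :
    (mulVars V).card =
      (V.image (fun v => v 0) ∪ (V.image fun v => v 0).image (· + 1)).card := by
  have hMV : ∀ w ∈ mulVars V, ∑ j, w j = d + 1 := by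
    intro w hw
    obtain ⟨v, hv, rfl | rfl⟩ := mem_mulVars_iff_two.mp hw <;> rw [sum_add_single_one, hV v hv]
  rw [← card_image_apply_zero hMV, image_apply_zero_mulVars]

theorem isGotzmann_iff_card_mulVars_two (hne : V.Nonempty) :
    IsGotzmann V ↔ (mulVars V).card = V.card + 1 := by
  have hpos := hne.card_pos
  simp only [IsGotzmann, IsGotzmannOn, IsBinRep, upVal, mulVars, card_univ, Fintype.card_fin,
    hne.ne_empty, false_or]
  constructor
  · rintro (⟨h, _⟩ | ⟨p, f, ⟨hp1, hp, _, hsum⟩, hup⟩)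
    · omega
    · obtain rfl : p = 1 := by omega
      simp only [Icc_self, sum_singleton, Nat.choose_one_right] at hsum hup
      omega
  · intro h
    refine Or.inr ⟨1, fun _ => V.card - 1, ⟨le_rfl, le_rfl, fun _ _ _ _ _ => le_rfl, ?_⟩, ?_⟩ <;>
      simp only [Icc_self, sum_singleton, Nat.choose_one_right] <;> omega

theorem image_apply_zero_subset_Icc {d : ℕ} (hV : ∀ v ∈ V, ∑ j, v j = d) :
    V.image (fun v => v 0) ⊆ Icc 0 d := fun a ha => by
  obtain ⟨v, hv, rfl⟩ := mem_image.mp ha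
  have := hV v hv
  rw [Fin.sum_univ_two] at this
  exact mem_Icc.mpr ⟨Nat.zero_le _, by omega⟩

theorem forall_mem_iff_image_apply_zero_eq_Icc {d : ℕ} (hV : ∀ v ∈ V, ∑ j, v j = d) :
    (∀ v : Fin 2 → ℕ, ∑ j, v j = d → v ∈ V) ↔ V.image (fun v => v 0) = Icc 0 d := by
  rw [Subset.antisymm_iff, and_iff_right (image_apply_zero_subset_Icc hV)]
  constructor
  · intro hall a ha
    have had : a ≤ d := (mem_Icc.mp ha).2
    exact mem_image.mpr ⟨![a, d - a], hall _ (by simp [Fin.sum_univ_two, had]), rfl⟩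
  · intro hA v hv
    have hv0 : v 0 ∈ Icc 0 d := by
      rw [Fin.sum_univ_two] at hv
      exact mem_Icc.mpr ⟨Nat.zero_le _, by omega⟩
    obtain ⟨u, hu, hu0⟩ := mem_image.mp (hA hv0)
    rwa [← injOn_apply_zero_of_sum_eq d (hV u hu) hv hu0]

end TwoVariables

/-- In two variables, a nonempty set of monomials of degree `d` with `gcd(V)=1`
is Gotzmann iff it consists of all monomials of degree `d`. -/
theorem gotzmann_two_vars (d : ℕ) (V : Finset (Fin 2 → ℕ)) (hne : V.Nonempty)
    (hdeg : ∀ v ∈ V, ∑ j, v j = d) (hgcd : gcdMon V = 0) :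
    IsGotzmann V ↔ ∀ v : Fin 2 → ℕ, (∑ j, v j = d) → v ∈ V := by
  set A := V.image fun v => v 0
  have h0 : 0 ∈ A := by
    obtain ⟨v, hv, hv0⟩ := exists_mem_apply_eq_zero_of_gcdMon_eq_zero hne (congrFun hgcd 0)
    exact mem_image.mpr ⟨v, hv, hv0⟩
  have hd : d ∈ A := by
    obtain ⟨v, hv, hv1⟩ := exists_mem_apply_eq_zero_of_gcdMon_eq_zero hne (congrFun hgcd 1)
    have := hdeg v hv
    rw [Fin.sum_univ_two, hv1, add_zero] at this
    exact mem_image.mpr ⟨v, hv, this⟩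
  rw [isGotzmann_iff_card_mulVars_two hne, card_mulVars_two hdeg, ← card_image_apply_zero hdeg,
    card_union_image_succ_eq_iff h0 hd (image_apply_zero_subset_Icc hdeg),
    forall_mem_iff_image_apply_zero_eq_Icc hdeg]
end

section
/- Let n = 3 and let V be a set of monomials of degree d in K[x_1,x_2,x_3] with u = gcd(V). If every monomial w of degree d not in V is a fixed empty element of V for some i ∈ {1,2,3}, and |V| > C(d - deg(u) + 1, 2), then V is a Gotzmann set. -/
open Finset

/-! Let `u = gcd V`, `N = d - deg u`, and let `Δ_m` be the monomials of degree `m` divisible by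
`u`, so that `|Δ_d| = C(N+2,2)` and `MV ⊆ Δ_{d+1}`. The bound on `|V|` says exactly that
`W = Δ_d \ V` has at most `N` elements, and writing `|V| = C(N+1,2) + C(N+1-|W|,1)` shows that
`V` is Gotzmann as soon as `|Δ_{d+1} \ MV| = |W|`.

Match `c ∈ Δ_d` with `x_i c` whenever every monomial of `Δ_d` under `c` for `i` lies in `W`;
a fixed empty element for `i` is such a `c`. The monomials of `Δ_d` under `c` for `i` are at
least `N + 1 - (c_i - u_i)` many, so two such sets for different directions cannot both fit in
`W` unless they overlap in more than a monomial or two, which they do not in the configurations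
that arise. Hence the matching is a bijection between `W` and `Δ_{d+1} \ MV`, in any number of
variables. -/

lemma Finset.one_add_sum_le_prod_one_add {ι : Type*} (s : Finset ι) (f : ι → ℕ) :
    1 + ∑ i ∈ s, f i ≤ ∏ i ∈ s, (1 + f i) := by
  induction s using Finset.cons_induction with
  | empty => simp
  | cons a s ha ih =>
    rw [sum_cons, prod_cons]
    calc 1 + (f a + ∑ i ∈ s, f i)
        ≤ (1 + f a) * (1 + ∑ i ∈ s, f i) := by rw [add_mul, one_mul, mul_add, mul_one]; omega
      _ ≤ (1 + f a) * ∏ i ∈ s, (1 + f i) := Nat.mul_le_mul_left _ ih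

lemma Nat.choose_two_succ (k : ℕ) : (k + 1).choose 2 = k.choose 2 + k := by
  rw [Nat.choose_succ_succ, Nat.choose_one_right, add_comm]

namespace MonomialSet

variable {n : ℕ}

lemma sum_add_single (x : Fin n → ℕ) (s : Fin n) (a : ℕ) :
    ∑ t, (x + Pi.single s a : Fin n → ℕ) t = ∑ t, x t + a := by
  simp [sum_add_distrib]

lemma mem_mulVars {V : Finset (Fin n → ℕ)} {z : Fin n → ℕ} :
    z ∈ mulVars V ↔ ∃ v ∈ V, ∃ t, v + Pi.single t 1 = z := by
  simp [mulVars, mulVarsOn]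

/-- The monomials `Δ_m` of degree `m` divisible by `u`. -/
def layer (u : Fin n → ℕ) (m : ℕ) : Finset (Fin n → ℕ) :=
  {x ∈ Icc u (fun _ => m) | ∑ t, x t = m}

variable {u c x z : Fin n → ℕ} {m d : ℕ} {i l : Fin n}

lemma mem_layer : x ∈ layer u m ↔ u ≤ x ∧ ∑ t, x t = m := by
  simp only [layer, mem_filter, mem_Icc]
  refine ⟨fun h => ⟨h.1.1, h.2⟩, fun ⟨hux, hx⟩ => ⟨⟨hux, fun t => ?_⟩, hx⟩⟩
  exact hx ▸ single_le_sum (fun _ _ => Nat.zero_le _) (mem_univ t)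

lemma sum_sub_of_mem_layer (hx : x ∈ layer u m) : ∑ t, (x t - u t) = m - ∑ t, u t := by
  rw [sum_tsub_distrib _ fun t _ => (mem_layer.1 hx).1 t, (mem_layer.1 hx).2]

lemma card_layer {u : Fin (n + 1) → ℕ} (h : ∑ t, u t ≤ m) :
    #(layer u m) = (m - ∑ t, u t + n).choose n := by
  have hmap : layer u m = (piAntidiag univ (m - ∑ t, u t)).map (addLeftEmbedding u) := by
    ext x
    simp only [mem_layer, mem_map, mem_piAntidiag, mem_univ, implies_true, and_true,
      addLeftEmbedding_apply]
    constructor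
    · rintro ⟨hux, rfl⟩
      exact ⟨x - u, sum_tsub_distrib _ fun t _ => hux t, add_tsub_cancel_of_le hux⟩
    · rintro ⟨y, hy, rfl⟩
      refine ⟨le_self_add, ?_⟩
      simp only [Pi.add_apply, sum_add_distrib, hy]
      omega
  rw [hmap, card_map, ← map_sym_eq_piAntidiag, card_map, sym_univ, card_univ,
    Sym.card_sym_eq_choose, Fintype.card_fin,
    show n + 1 + (m - ∑ t, u t) - 1 = m - ∑ t, u t + n by omega, Nat.choose_symm_add]

lemma add_single_mem_layer (hc : c ∈ layer u m) (t : Fin n) :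
    c + Pi.single t 1 ∈ layer u (m + 1) := by
  obtain ⟨huc, hc⟩ := mem_layer.1 hc
  exact mem_layer.2 ⟨huc.trans le_self_add, by rw [sum_add_single, hc]⟩

lemma exists_add_single_eq_of_lt (hz : z ∈ layer u (m + 1)) {t : Fin n} (ht : u t < z t) :
    ∃ c ∈ layer u m, c + Pi.single t 1 = z := by
  obtain ⟨huz, hz⟩ := mem_layer.1 hz
  have hle : Pi.single t 1 ≤ z := by
    intro s
    by_cases hs : s = t
    · subst hs; simp; omega
    · simp [hs]
  refine ⟨z - Pi.single t 1, mem_layer.2 ⟨fun s => ?_, ?_⟩, tsub_add_cancel_of_le hle⟩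
  · by_cases hs : s = t
    · subst hs; simp; omega
    · simpa [hs] using huz s
  · have := sum_add_single (z - Pi.single t 1) t 1
    rw [tsub_add_cancel_of_le hle, hz] at this
    omega

lemma exists_add_single_eq_of_le (hxz : x ≤ z) (hsum : ∑ t, x t + 1 = ∑ t, z t) :
    ∃ s, x s < z s ∧ x + Pi.single s 1 = z := by
  obtain ⟨s, -, hs⟩ := exists_lt_of_sum_lt (s := univ) (by omega : ∑ t, x t < ∑ t, z t)
  refine ⟨s, hs, funext fun t => ?_⟩
  have hle : ∀ t ∈ univ, (x + Pi.single s 1 : Fin n → ℕ) t ≤ z t := fun t _ => by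
    by_cases ht : t = s
    · subst ht; simpa using hs
    · simpa [ht] using hxz t
  exact (sum_eq_sum_iff_of_le hle).1 (by rw [sum_add_single, hsum]) t (mem_univ t)

lemma eq_of_le_of_mem_layer {y : Fin n → ℕ} (hx : x ∈ layer u m) (hy : y ∈ layer u m)
    (hxy : x ≤ y) : x = y :=
  funext fun t => (sum_eq_sum_iff_of_le fun t _ => hxy t).1
    ((mem_layer.1 hx).2.trans (mem_layer.1 hy).2.symm) t (mem_univ t)

lemma sub_add_sub_le_of_mem_layer (hz : z ∈ layer u m) (hil : i ≠ l) :
    (z i - u i) + (z l - u l) ≤ m - ∑ t, u t :=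
  sum_sub_of_mem_layer hz ▸ add_le_sum (f := fun t => z t - u t) (fun _ _ => Nat.zero_le _)
    (mem_univ i) (mem_univ l) hil

lemma card_lt_add_sub_add_sub_le (hil : i ≠ l) :
    #{s | u s < z s} + (z i - u i) + (z l - u l) ≤ ∑ t, (z t - u t) + 2 := by
  have key : ∀ s, ((if u s < z s then 1 else 0) + (if i = s then z s - u s else 0)) +
      (if l = s then z s - u s else 0) ≤
      (z s - u s + (if i = s then 1 else 0)) + (if l = s then 1 else 0) := by
    intro s
    split_ifs <;> omega
  have := sum_le_sum fun s (_ : s ∈ univ) => key s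
  simp only [sum_add_distrib, sum_ite_eq, mem_univ, if_true] at this
  rw [card_filter]
  omega

lemma mulVars_subset_layer {V : Finset (Fin n → ℕ)} (hV : V ⊆ layer u d) :
    mulVars V ⊆ layer u (d + 1) := fun z hz => by
  obtain ⟨v, hv, t, rfl⟩ := mem_mulVars.1 hz
  exact add_single_mem_layer (hV hv) t

def under (u : Fin n → ℕ) (d : ℕ) (i : Fin n) (c : Fin n → ℕ) : Finset (Fin n → ℕ) :=
  {x ∈ layer u d | ∀ t ≠ i, x t ≤ c t}

lemma mem_under : x ∈ under u d i c ↔ x ∈ layer u d ∧ ∀ t ≠ i, x t ≤ c t :=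
  mem_filter

lemma under_subset_of_isFEE {V : Finset (Fin n → ℕ)} (h : IsFEE n d V i c) :
    under u d i c ⊆ layer u d \ V := fun x hx =>
  mem_sdiff.2 ⟨(mem_under.1 hx).1, h.2 x (mem_layer.1 (mem_under.1 hx).1).2 (mem_under.1 hx).2⟩

lemma card_Icc_update_add (huc : u ≤ c) (i : Fin n) :
    ∑ t, (c t - u t) + 1 ≤ #(Icc u (Function.update c i (u i))) + (c i - u i) := by
  set c' := Function.update c i (u i)
  have huc' (t : Fin n) : u t ≤ c' t := by
    by_cases ht : t = i
    · simp [c', ht]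
    · simpa [c', ht] using huc t
  have hsum : ∑ t, (c' t - u t) + (c i - u i) = ∑ t, (c t - u t) := by
    have hc' := add_sum_erase univ (fun t => c' t - u t) (mem_univ i)
    have hc := add_sum_erase univ (fun t => c t - u t) (mem_univ i)
    have herase : ∑ t ∈ univ.erase i, (c' t - u t) = ∑ t ∈ univ.erase i, (c t - u t) :=
      sum_congr rfl fun t ht => by simp [c', ne_of_mem_erase ht]
    have hi : c' i - u i = 0 := by simp [c']
    omega
  calc ∑ t, (c t - u t) + 1 = 1 + ∑ t, (c' t - u t) + (c i - u i) := by omega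
    _ ≤ ∏ t, (1 + (c' t - u t)) + (c i - u i) := by
      gcongr; exact one_add_sum_le_prod_one_add _ _
    _ = #(Icc u c') + (c i - u i) := by
      rw [Pi.card_Icc]
      congr 1
      exact prod_congr rfl fun t _ => by rw [Nat.card_Icc]; have := huc' t; omega

lemma le_card_under_add (hc : c ∈ layer u d) (i : Fin n) :
    d - ∑ t, u t + 1 ≤ #(under u d i c) + (c i - u i) := by
  obtain ⟨huc, hcd⟩ := mem_layer.1 hc
  have hbox := card_Icc_update_add huc i
  rw [sum_sub_of_mem_layer hc] at hbox
  set c' := Function.update c i (u i)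
  -- lift each point of the box `[u, c']` to degree `d` along the `i`-th coordinate
  set lift : (Fin n → ℕ) → Fin n → ℕ := fun y => y + Pi.single i (d - ∑ t, y t)
  have hlift_ne (y : Fin n → ℕ) (t : Fin n) (ht : t ≠ i) : lift y t = y t := by simp [lift, ht]
  have hmaps : ∀ y ∈ Icc u c', lift y ∈ under u d i c := by
    intro y hy
    obtain ⟨huy, hyc⟩ := mem_Icc.1 hy
    have hyd : ∑ t, y t ≤ d := by
      refine hcd ▸ sum_le_sum fun t _ => ?_
      by_cases ht : t = i
      · subst ht
        exact (show y t ≤ u t by simpa [c'] using hyc t).trans (huc t)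
      · simpa [c', ht] using hyc t
    refine mem_under.2 ⟨mem_layer.2 ⟨huy.trans le_self_add, ?_⟩, fun t ht => ?_⟩
    · rw [sum_add_single]; omega
    · simpa [hlift_ne y t ht, c', ht] using hyc t
  have hinj : Set.InjOn lift (Icc u c') := by
    intro y hy y' hy' hyy'
    funext t
    by_cases ht : t = i
    · have hyi : y i = u i :=
        le_antisymm (by simpa [c'] using (mem_Icc.1 hy).2 i) ((mem_Icc.1 hy).1 i)
      have hyi' : y' i = u i :=
        le_antisymm (by simpa [c'] using (mem_Icc.1 hy').2 i) ((mem_Icc.1 hy').1 i)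
      rw [ht, hyi, hyi']
    · rw [← hlift_ne y t ht, ← hlift_ne y' t ht, hyy']
  have := card_le_card_of_injOn lift hmaps hinj
  omega

lemma add_single_notMem_mulVars {V : Finset (Fin n → ℕ)} (hV : V ⊆ layer u d)
    (hc : under u d i c ⊆ layer u d \ V) : c + Pi.single i 1 ∉ mulVars V := by
  rintro hz
  obtain ⟨v, hv, t, hvc⟩ := mem_mulVars.1 hz
  refine (mem_sdiff.1 (hc (mem_under.2 ⟨hV hv, fun s hs => ?_⟩))).2 hv
  have := congrFun hvc s
  simp only [Pi.add_apply, Pi.single_apply, hs, if_false] at this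
  omega

section Directions

variable {W : Finset (Fin n → ℕ)}

lemma lt_card_of_under_subset {c' : Fin n → ℕ} (hc : c ∈ layer u d) (hc' : c' ∈ layer u d)
    (hi : under u d i c ⊆ W) (hl : under u d l c' ⊆ W)
    (hsmall : #(under u d i c ∩ under u d l c') + (c i - u i) + (c' l - u l) ≤
      d - ∑ t, u t + 1) :
    d - ∑ t, u t < #W := by
  have := card_union_add_card_inter (under u d i c) (under u d l c')
  have := card_le_card (union_subset hi hl)
  have := le_card_under_add hc i
  have := le_card_under_add hc' l
  omega

variable (hW : #W ≤ d - ∑ t, u t)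
include hW

lemma eq_of_under_subset (hc : c ∈ layer u d) (hi : under u d i c ⊆ W)
    (hl : under u d l c ⊆ W) : i = l := by
  by_contra hil
  have hinter : under u d i c ∩ under u d l c ⊆ {c} := by
    intro x hx
    obtain ⟨⟨hx, hxi⟩, -, hxl⟩ := And.imp mem_under.1 mem_under.1 (mem_inter.1 hx)
    refine mem_singleton.2 (eq_of_le_of_mem_layer hx hc fun t => ?_)
    by_cases ht : t = i
    · exact hxl t (ht ▸ hil)
    · exact hxi t ht
  have := card_le_card hinter
  have := sub_add_sub_le_of_mem_layer hc hil
  rw [card_singleton] at *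
  exact absurd hW (not_le.2 (lt_card_of_under_subset hc hc hi hl (by omega)))

lemma eq_of_add_single_eq_of_under_subset {c' : Fin n → ℕ} (hc : c ∈ layer u d)
    (hc' : c' ∈ layer u d) (hcc' : c + Pi.single i 1 = c' + Pi.single l 1)
    (hi : under u d i c ⊆ W) (hl : under u d l c' ⊆ W) : i = l := by
  by_contra hil
  set z := c + Pi.single i 1
  have hz : z ∈ layer u (d + 1) := add_single_mem_layer hc i
  have hcz : c ≤ z := le_self_add
  have hc'z : c' ≤ z := hcc' ▸ le_self_add
  have hzi : z i = c i + 1 := by simp [z]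
  have hzl : z l = c' l + 1 := by simp [hcc']
  -- a monomial under both is `z / x_s` for a variable `x_s` dividing `z / u`
  have hinter : #(under u d i c ∩ under u d l c') ≤ #{s | u s < z s} := by
    refine card_le_card_of_forall_subsingleton (fun x s => x + Pi.single s 1 = z) ?_ ?_
    · intro x hx
      obtain ⟨⟨hx, hxi⟩, -, hxl⟩ := And.imp mem_under.1 mem_under.1 (mem_inter.1 hx)
      have hxz : x ≤ z := fun t => by
        by_cases ht : t = i
        · exact ht ▸ (hxl i hil).trans (hc'z i)
        · exact (hxi t ht).trans (hcz t)
      obtain ⟨s, hs, hxs⟩ := exists_add_single_eq_of_le hxz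
        (by rw [(mem_layer.1 hx).2, (mem_layer.1 hz).2])
      exact ⟨s, mem_filter.2 ⟨mem_univ s, ((mem_layer.1 hx).1 s).trans_lt hs⟩, hxs⟩
    · intro s _ x hx x' hx'
      exact add_right_cancel (hx.2.trans hx'.2.symm)
  have hsupp := card_lt_add_sub_add_sub_le (u := u) (z := z) hil
  rw [sum_sub_of_mem_layer hz] at hsupp
  have hui : u i ≤ c i := (mem_layer.1 hc).1 i
  have hul : u l ≤ c' l := (mem_layer.1 hc').1 l
  exact absurd hW (not_le.2 (lt_card_of_under_subset hc hc' hi hl (by omega)))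

lemma eq_of_add_single_eq_of_under_subset_of_ne {c' : Fin n → ℕ} {t : Fin n}
    (hc : c ∈ layer u d) (hc' : c' ∈ layer u d) (hcc' : c + Pi.single t 1 = c' + Pi.single i 1)
    (hti : t ≠ i) (hi : under u d i c ⊆ W) (hl : under u d l c' ⊆ W) : l = i := by
  by_contra hli
  have hci : c i = c' i + 1 := by simpa [hti.symm] using congrFun hcc' i
  have hinter : under u d i c ∩ under u d l c' = ∅ := by
    refine eq_empty_of_forall_notMem fun x hx => ?_
    obtain ⟨⟨hx, hxi⟩, -, hxl⟩ := And.imp mem_under.1 mem_under.1 (mem_inter.1 hx)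
    have hlt : ∑ s, x s < ∑ s, c s := by
      refine sum_lt_sum (fun s _ => ?_) ⟨i, mem_univ i, by have := hxl i (Ne.symm hli); omega⟩
      by_cases hs : s = i
      · subst hs; have := hxl s (Ne.symm hli); omega
      · exact hxi s hs
    rw [(mem_layer.1 hx).2, (mem_layer.1 hc).2] at hlt
    exact lt_irrefl d hlt
  set z := c + Pi.single t 1
  have hz : z ∈ layer u (d + 1) := add_single_mem_layer hc t
  have := sub_add_sub_le_of_mem_layer hz (Ne.symm hli)
  have hzi : z i = c i := by simp [z, hti.symm]
  have hzl : c' l ≤ z l := (hcc' ▸ le_self_add : c' ≤ z) l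
  have h0 : #(under u d i c ∩ under u d l c') = 0 := by rw [hinter, card_empty]
  exact absurd hW (not_le.2 (lt_card_of_under_subset hc hc' hi hl (by omega)))

end Directions

lemma exists_under_subset_of_mem_sdiff_mulVars {V : Finset (Fin n → ℕ)}
    (hfee : ∀ w : Fin n → ℕ, ∑ t, w t = d → w ∉ V → ∃ i, IsFEE n d V i w)
    (hW : #(layer u d \ V) ≤ d - ∑ t, u t) (hud : ∑ t, u t ≤ d)
    (hz : z ∈ layer u (d + 1) \ mulVars V) :
    ∃ c ∈ layer u d, ∃ i, c + Pi.single i 1 = z ∧ under u d i c ⊆ layer u d \ V := by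
  obtain ⟨hzl, hzM⟩ := mem_sdiff.1 hz
  have hbelow : ∀ t, u t < z t → ∃ c ∈ layer u d, c + Pi.single t 1 = z ∧
      ∃ i, under u d i c ⊆ layer u d \ V := by
    intro t ht
    obtain ⟨c, hc, rfl⟩ := exists_add_single_eq_of_lt hzl ht
    have hcV : c ∉ V := fun hcV => hzM (mem_mulVars.2 ⟨c, hcV, t, rfl⟩)
    obtain ⟨i, hi⟩ := hfee c (mem_layer.1 hc).2 hcV
    exact ⟨c, hc, rfl, i, under_subset_of_isFEE hi⟩
  obtain ⟨t, -, ht⟩ := exists_lt_of_sum_lt (s := univ) (f := u) (g := z)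
    (by rw [(mem_layer.1 hzl).2]; omega)
  obtain ⟨c, hc, hcz, i, hi⟩ := hbelow t ht
  by_cases hti : t = i
  · exact ⟨c, hc, i, hti ▸ hcz, hi⟩
  -- `under u d i c` is too large to fit in `W` unless `x_i` divides `z / u`
  have hzi : u i < z i := by
    have := le_card_under_add hc i
    have := card_le_card hi
    have : c i = z i := by rw [← hcz]; simp [Ne.symm hti]
    omega
  obtain ⟨c', hc', hcz', l, hl⟩ := hbelow i hzi
  obtain rfl := eq_of_add_single_eq_of_under_subset_of_ne hW hc hc' (hcz.trans hcz'.symm) hti hi hl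
  exact ⟨c', hc', l, hcz', hl⟩

theorem card_layer_succ_sdiff_mulVars {V : Finset (Fin n → ℕ)} (hV : V ⊆ layer u d)
    (hfee : ∀ w : Fin n → ℕ, ∑ t, w t = d → w ∉ V → ∃ i, IsFEE n d V i w)
    (hW : #(layer u d \ V) ≤ d - ∑ t, u t) (hud : ∑ t, u t ≤ d) :
    #(layer u (d + 1) \ mulVars V) = #(layer u d \ V) := by
  let r c z := ∃ i, c + Pi.single i 1 = z ∧ under u d i c ⊆ layer u d \ V
  apply le_antisymm
  · refine card_le_card_of_forall_subsingleton' r (fun z hz => ?_) fun c hc z hz z' hz' => ?_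
    · obtain ⟨c, hc, i, hcz, hi⟩ := exists_under_subset_of_mem_sdiff_mulVars hfee hW hud hz
      exact ⟨c, hi (mem_under.2 ⟨hc, fun _ _ => le_rfl⟩), i, hcz, hi⟩
    · obtain ⟨-, i, rfl, hi⟩ := hz
      obtain ⟨-, l, rfl, hl⟩ := hz'
      rw [eq_of_under_subset hW (mem_sdiff.1 hc).1 hi hl]
  · refine card_le_card_of_forall_subsingleton r (fun c hc => ?_) fun z hz c hc c' hc' => ?_
    · obtain ⟨hcl, hcV⟩ := mem_sdiff.1 hc
      obtain ⟨i, hi⟩ := hfee c (mem_layer.1 hcl).2 hcV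
      have hi := under_subset_of_isFEE (u := u) hi
      exact ⟨c + Pi.single i 1, mem_sdiff.2 ⟨add_single_mem_layer hcl i,
        add_single_notMem_mulVars hV hi⟩, i, rfl, hi⟩
    · obtain ⟨hc, i, hcz, hi⟩ := hc
      obtain ⟨hc', l, hc'z, hl⟩ := hc'
      have hcc' := hcz.trans hc'z.symm
      obtain rfl := eq_of_add_single_eq_of_under_subset hW (mem_sdiff.1 hc).1
        (mem_sdiff.1 hc').1 hcc' hi hl
      exact add_right_cancel hcc'

end MonomialSet

lemma isGotzmann_of_card {V : Finset (Fin 3 → ℕ)} {N s : ℕ} (hs : s ≤ N)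
    (hV : #V + s = (N + 2).choose 2) (hMV : #(mulVars V) + s = (N + 3).choose 2) :
    IsGotzmann V := by
  have h2 : (N + 2).choose 2 = (N + 1).choose 2 + (N + 1) := Nat.choose_two_succ (N + 1)
  have h3 : (N + 3).choose 2 = (N + 2).choose 2 + (N + 2) := Nat.choose_two_succ (N + 2)
  unfold mulVars at hMV
  refine Or.inr (Or.inr ?_)
  simp only [card_univ, Fintype.card_fin, Nat.add_one_sub_one]
  rcases Nat.eq_zero_or_pos s with rfl | hs0
  · refine ⟨2, fun _ => N, ⟨one_le_two, le_rfl, fun _ _ _ _ _ => le_rfl, ?_⟩, ?_⟩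
    · simp only [Icc_self, sum_singleton]; omega
    · simp only [upVal, Icc_self, sum_singleton]; exact hMV
  · refine ⟨1, fun j => if j = 1 then N - s else N - 1,
      ⟨le_rfl, one_le_two, fun j k _ _ _ => by dsimp only; split_ifs <;> omega, ?_⟩, ?_⟩
    · simp [sum_Icc_succ_top, show N - 1 + 2 = N + 1 by omega]
      omega
    · simp [upVal, sum_Icc_succ_top, show N - 1 + 2 + 1 = N + 2 by omega]
      omega

/-- In three variables, if every degree-`d` monomial not in `V` is a fixed empty
element of `V` for some `i` and `|V| > C(d - deg(gcd V) + 1, 2)`, then `V`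
is a Gotzmann set. -/
theorem gotzmann_of_fee_three_vars (d : ℕ) (V : Finset (Fin 3 → ℕ))
    (hdeg : ∀ v ∈ V, ∑ j, v j = d)
    (hfee : ∀ w : Fin 3 → ℕ, (∑ j, w j = d) → w ∉ V → ∃ i : Fin 3, IsFEE 3 d V i w)
    (hcard : Nat.choose (d + 1 - ∑ j, gcdMon V j) 2 < V.card) :
    IsGotzmann V := by
  set u := gcdMon V
  have hV : V ⊆ MonomialSet.layer u d := fun v hv =>
    MonomialSet.mem_layer.2 ⟨fun t => Nat.sInf_le ⟨v, hv, rfl⟩, hdeg v hv⟩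
  obtain ⟨v, hv⟩ : V.Nonempty := card_pos.1 (Nat.zero_lt_of_lt hcard)
  have hud : ∑ t, u t ≤ d := hdeg v hv ▸ sum_le_sum fun t _ => Nat.sInf_le ⟨v, hv, rfl⟩
  rw [Nat.sub_add_comm hud] at hcard
  set N := d - ∑ t, u t
  have hlayer : #(MonomialSet.layer u d) = (N + 2).choose 2 := MonomialSet.card_layer hud
  have hlayer' : #(MonomialSet.layer u (d + 1)) = (N + 3).choose 2 := by
    rw [MonomialSet.card_layer (hud.trans (Nat.le_add_right d 1)), Nat.sub_add_comm hud]
  have hsucc : (N + 2).choose 2 = (N + 1).choose 2 + (N + 1) := Nat.choose_two_succ (N + 1)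
  have hVW := card_sdiff_add_card_eq_card hV
  have hW : #(MonomialSet.layer u d \ V) ≤ N := by omega
  have hMW := card_sdiff_add_card_eq_card (MonomialSet.mulVars_subset_layer hV)
  rw [MonomialSet.card_layer_succ_sdiff_mulVars hV hfee hW hud] at hMW
  exact isGotzmann_of_card hW (by omega) (by omega)
end

section
/- In K[x_1,x_2,x_3], if u is a fixed empty element of a monomial set V ⊂ M^d for index i, then x_i u is a fixed empty element of MV (viewed as a subset of M^{d+1}) for index i; in particular x_i u ∉ MV. -/
open Finset

variable {n d : ℕ} {V : Finset (Fin n → ℕ)} {i : Fin n} {u : Fin n → ℕ}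

theorem IsFEE.notMem_mulVarsOn (hdeg : ∀ v ∈ V, ∑ j, v j = d) (hfee : IsFEE n d V i u)
    (S : Finset (Fin n)) {v : Fin n → ℕ} (hv : ∀ j, j ≠ i → v j ≤ u j) :
    v ∉ mulVarsOn S V := by
  simp only [mulVarsOn, mem_biUnion, mem_image, not_exists, not_and]
  rintro w hwV k - rfl
  exact hfee.2 w (hdeg w hwV) (fun j hj => (Nat.le_add_right (w j) _).trans (hv j hj)) hwV

theorem IsFEE.mulVarsOn_add_single (hdeg : ∀ v ∈ V, ∑ j, v j = d) (hfee : IsFEE n d V i u)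
    (S : Finset (Fin n)) : IsFEE n (d + 1) (mulVarsOn S V) i (u + Pi.single i 1) := by
  have under_add_single {v : Fin n → ℕ}
      (hv : ∀ j, j ≠ i → v j ≤ (u + Pi.single i 1 : Fin n → ℕ) j) :
      ∀ j, j ≠ i → v j ≤ u j := fun j hj => by
    simpa [Pi.single_apply, hj] using hv j hj
  exact ⟨hfee.notMem_mulVarsOn hdeg S (under_add_single fun _ _ => le_rfl),
    fun v _ hv => hfee.notMem_mulVarsOn hdeg S (under_add_single hv)⟩

theorem fee_shadow_general (d : ℕ) (V : Finset (Fin 3 → ℕ))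
    (hdeg : ∀ v ∈ V, ∑ j, v j = d) (i : Fin 3) (u : Fin 3 → ℕ)
    (hfee : IsFEE 3 d V i u) :
    IsFEE 3 (d + 1) (mulVars V) i (u + Pi.single i 1) :=
  hfee.mulVarsOn_add_single hdeg univ

/-- In three variables, if `u` is a fixed empty element of `V ⊆ M^d` for `i`, then
`x_i u` is a fixed empty element of `MV ⊆ M^{d+1}` for `i`; in particular `x_i u ∉ MV`. -/
theorem fee_shadow (d : ℕ) (V : Finset (Fin 3 → ℕ))
    (hdeg : ∀ v ∈ V, ∑ j, v j = d) (i : Fin 3) (u : Fin 3 → ℕ)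
    (hu : ∑ j, u j = d) (hfee : IsFEE 3 d V i u) :
    IsFEE 3 (d + 1) (mulVars V) i (u + Pi.single i 1) :=
  fee_shadow_general d V hdeg i u hfee
end
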